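/- arXiv:math/0111251 — 2 statements merged into one kernel-verified Lean document; each statement's English description precedes it below -/
import Mathlib

section
/- Let α be a positive function on an open set X ⊆ ℂⁿ. Define the Lelong functional H_L^α(f) = Σ_{z∈𝔻} α(f(z))·m_z(f)·log|z| and the reduced Lelong functional H̃_L^α(f) = Σ_{z∈𝔻} α(f(z))·log|z| for closed analytic discs f in X, where m_z(f) is the multiplicity of f at z. Then the envelopes coincide: inf{H_L^α(f) : f(0) = x} = inf{H̃_L^α(f) : f(0) = x} for every x ∈ X. -/
open Metric Set
open scoped ENNReal

/-- The multiplicity of a holomorphic map at `z`: the order of vanishing of `f − f(z)` at `z`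
(`⊤` for locally constant maps), as an extended nonnegative real. -/
noncomputable def multE {N : ℕ} (f : ℂ → (Fin N → ℂ)) (z : ℂ) : ℝ≥0∞ :=
  sInf ((fun n : ℕ => (n : ℝ≥0∞)) '' {n : ℕ | 0 < n ∧ iteratedDeriv n f z ≠ 0})

/-- `−log|z| ∈ [0,∞]` for `z` in the unit disc. -/
noncomputable def negLogE (z : ℂ) : ℝ≥0∞ :=
  if z = 0 then ⊤ else ENNReal.ofReal (-Real.log ‖z‖)

/-- A closed analytic disc with image in `X ⊆ ℂⁿ`. -/
def IsDiscIn {N : ℕ} (X : Set (Fin N → ℂ)) (f : ℂ → (Fin N → ℂ)) : Prop :=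
  (∃ U : Set ℂ, IsOpen U ∧ closedBall (0:ℂ) 1 ⊆ U ∧ DifferentiableOn ℂ f U) ∧
    f '' closedBall (0:ℂ) 1 ⊆ X

/-- The Lelong functional `H_L^α(f) = Σ_{z∈𝔻} α(f(z)) m_z(f) log|z| ∈ [−∞,0]`. -/
noncomputable def lelongFunctional {N : ℕ} (α : (Fin N → ℂ) → ℝ) (f : ℂ → (Fin N → ℂ)) : EReal :=
  -((∑' z : ball (0:ℂ) 1, ENNReal.ofReal (α (f z)) * multE f z * negLogE z : ℝ≥0∞) : EReal)

/-- The reduced Lelong functional `H̃_L^α(f) = Σ_{z∈𝔻} α(f(z)) log|z| ∈ [−∞,0]`. -/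
noncomputable def reducedLelongFunctional {N : ℕ} (α : (Fin N → ℂ) → ℝ) (f : ℂ → (Fin N → ℂ)) : EReal :=
  -((∑' z : ball (0:ℂ) 1, ENNReal.ofReal (α (f z)) * negLogE z : ℝ≥0∞) : EReal)

/-- The envelope of a disc functional over discs in `X` centred at `x`. -/
noncomputable def envelopeIn {N : ℕ} (X : Set (Fin N → ℂ)) (H : (ℂ → (Fin N → ℂ)) → EReal)
    (x : Fin N → ℂ) : EReal :=
  sInf (H '' {f | IsDiscIn X f ∧ f 0 = x})

lemma one_le_multE {N : ℕ} (f : ℂ → (Fin N → ℂ)) (z : ℂ) : 1 ≤ multE f z := by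
  refine le_sInf ?_
  rintro b ⟨n, ⟨hn, -⟩, rfl⟩
  exact Nat.one_le_cast.mpr hn

lemma multE_top {N : ℕ} {f : ℂ → (Fin N → ℂ)} {z : ℂ} (h : multE f z = ⊤) :
    ∀ n, 0 < n → iteratedDeriv n f z = 0 := by
  intro n hn
  by_contra hne
  have h1 : multE f z ≤ n := sInf_le ⟨n, ⟨hn, hne⟩, rfl⟩
  rw [h, top_le_iff] at h1
  exact (ENNReal.natCast_ne_top n) h1

lemma exists_nat_multE {N : ℕ} {f : ℂ → (Fin N → ℂ)} {z : ℂ} (h : multE f z ≠ ⊤) :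
    ∃ m : ℕ, multE f z = m ∧ 0 < m ∧ ∀ n, 0 < n → n < m → iteratedDeriv n f z = 0 := by
  set S := {n : ℕ | 0 < n ∧ iteratedDeriv n f z ≠ 0} with hSdef
  have hS : S.Nonempty := by
    by_contra h'
    rw [Set.not_nonempty_iff_eq_empty] at h'
    apply h
    rw [multE, show {n : ℕ | 0 < n ∧ iteratedDeriv n f z ≠ 0} = (∅ : Set ℕ) from h']
    simp
  refine ⟨sInf S, le_antisymm (sInf_le ⟨sInf S, Nat.sInf_mem hS, rfl⟩) (le_sInf ?_),
    (Nat.sInf_mem hS).1, ?_⟩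
  · rintro b ⟨n, hn, rfl⟩
    exact Nat.cast_le.mpr (Nat.sInf_le hn)
  · intro n hn hnm
    by_contra hne
    have : sInf S ≤ n := Nat.sInf_le ⟨hn, hne⟩
    omega

variable {E : Type*} [NormedAddCommGroup E] [NormedSpace ℂ E] [CompleteSpace E]

lemma eventually_const_of_iteratedDeriv_zero {f : ℂ → E} {z : ℂ} (hf : AnalyticAt ℂ f z)
    (h : ∀ n, 0 < n → iteratedDeriv n f z = 0) : ∀ᶠ w in nhds z, f w = f z := by
  obtain ⟨p, hp⟩ := hf
  obtain ⟨r, hpb⟩ := id hp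
  have hcoeff : ∀ n, 0 < n → p n = 0 := by
    intro n hn
    have h1 := hpb.factorial_smul (1 : ℂ) n
    rw [← iteratedDeriv_eq_iteratedFDeriv, h n hn] at h1
    have h2 : ((n.factorial : ℂ)) • (p n fun _ => (1:ℂ)) = 0 := by
      rw [← h1, ← Nat.cast_smul_eq_nsmul ℂ]
    rw [smul_eq_zero] at h2
    rcases h2 with h2 | h2
    · exact absurd h2 (by exact_mod_cast n.factorial_ne_zero)
    · exact FormalMultilinearSeries.coeff_eq_zero.mp h2
  have hball : ∀ y ∈ Metric.eball (0:ℂ) r, f (z + y) = f z := by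
    intro y hy
    have hsum := hpb.hasSum hy
    have hsum2 : HasSum (fun n => p n fun _ => y) (p 0 fun _ => y) := by
      refine hasSum_single 0 fun b hb => ?_
      rw [hcoeff b (Nat.pos_of_ne_zero hb)]
      rfl
    rw [hsum.unique hsum2]
    exact hp.coeff_zero _
  have hmem : Metric.eball z r ∈ nhds z := Metric.eball_mem_nhds z hpb.r_pos
  filter_upwards [hmem] with w hw
  have : w - z ∈ Metric.eball (0:ℂ) r := by
    rw [Metric.mem_eball] at hw ⊢
    simpa [edist_eq_enorm_sub] using hw
  have := hball (w - z) this
  rwa [add_sub_cancel] at this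

lemma coeff_eq_zero_of_iteratedDeriv_zero {f : ℂ → E} {p : FormalMultilinearSeries ℂ ℂ E}
    {z : ℂ} {r : ℝ≥0∞} (hpb : HasFPowerSeriesOnBall f p z r) {n : ℕ}
    (h : iteratedDeriv n f z = 0) : p n = 0 := by
  have h1 := hpb.factorial_smul (1 : ℂ) n
  rw [← iteratedDeriv_eq_iteratedFDeriv, h] at h1
  have h2 : ((n.factorial : ℂ)) • (p n fun _ => (1:ℂ)) = 0 := by
    rw [← h1, ← Nat.cast_smul_eq_nsmul ℂ]
  rw [smul_eq_zero] at h2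
  rcases h2 with h2 | h2
  · exact absurd h2 (by exact_mod_cast n.factorial_ne_zero)
  · exact FormalMultilinearSeries.coeff_eq_zero.mp h2

lemma eq_const_on_ball {f : ℂ → E} {U : Set ℂ} (hU : IsOpen U) (hcb : closedBall (0:ℂ) 1 ⊆ U)
    (hf : DifferentiableOn ℂ f U) {z : ℂ} (hz : z ∈ ball (0:ℂ) 1)
    (h : ∀ n, 0 < n → iteratedDeriv n f z = 0) : ∀ w ∈ ball (0:ℂ) 1, f w = f z := by
  obtain ⟨δ, hδ, hth⟩ := (isCompact_closedBall (0:ℂ) 1).exists_thickening_subset_open hU hcb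
  have hsub : ball (0:ℂ) (1 + δ) ⊆ U := by
    rw [thickening_closedBall hδ zero_le_one] at hth
    rwa [add_comm] at hth
  have han : AnalyticOnNhd ℂ f (ball 0 (1+δ)) := (hf.mono hsub).analyticOnNhd isOpen_ball
  have hpre : IsPreconnected (ball (0:ℂ) (1+δ)) := (convex_ball _ _).isPreconnected
  have hzmem : z ∈ ball (0:ℂ) (1+δ) := ball_subset_ball (by linarith) hz
  have hev : f =ᶠ[nhds z] (fun _ => f z) := eventually_const_of_iteratedDeriv_zero (han z hzmem) h
  have heq := han.eqOn_of_preconnected_of_eventuallyEq analyticOnNhd_const hpre hzmem hev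
  intro w hw
  exact heq (ball_subset_ball (by linarith) hw)

lemma taylor_bound {f : ℂ → E} {z₀ : ℂ} (hf : AnalyticAt ℂ f z₀) {m : ℕ} (hm : 0 < m)
    (h : ∀ n, 0 < n → n < m → iteratedDeriv n f z₀ = 0) :
    ∃ δ > 0, ∃ C > 0, ∀ w : ℂ, dist w z₀ ≤ δ → ‖f w - f z₀‖ ≤ C * dist w z₀ ^ m := by
  obtain ⟨p, hp⟩ := hf
  obtain ⟨r, hpb⟩ := id hp
  obtain ⟨r'e, hr'0, hr'⟩ := ENNReal.lt_iff_exists_nnreal_btwn.mp hpb.r_pos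
  have hr'pos : 0 < r'e := by exact_mod_cast hr'0
  obtain ⟨a, ha, C, hC, hb⟩ := hpb.uniform_geometric_approx' hr'
  have hps : ∀ y : ℂ, p.partialSum m y = f z₀ := by
    intro y
    rw [FormalMultilinearSeries.partialSum]
    rw [Finset.sum_eq_single 0]
    · exact hp.coeff_zero _
    · intro b hb' hb0
      rw [coeff_eq_zero_of_iteratedDeriv_zero hpb
        (h b (Nat.pos_of_ne_zero hb0) (Finset.mem_range.mp hb'))]
      rfl
    · intro h0
      exact absurd (Finset.mem_range.mpr hm) h0
  have hx : (0:ℝ) ≤ (a / r'e)^m := pow_nonneg (div_nonneg ha.1.le r'e.coe_nonneg) m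
  have hCx : (0:ℝ) ≤ C * (a / r'e)^m := mul_nonneg hC.le hx
  refine ⟨r'e / 2, by positivity, C * (a / r'e)^m + 1, by linarith, ?_⟩
  intro w hw
  have hdist : dist w z₀ = ‖w - z₀‖ := dist_eq_norm _ _
  have hy : (w - z₀) ∈ ball (0:ℂ) (r'e : ℝ) := by
    rw [mem_ball, dist_zero_right]
    rw [hdist] at hw
    have : (r'e : ℝ) / 2 < r'e := by
      have : (0:ℝ) < r'e := hr'pos
      linarith
    linarith
  have h3 := hb (w - z₀) hy m
  rw [hps] at h3
  rw [show z₀ + (w - z₀) = w by ring] at h3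
  have h4 : C * (a * (‖w - z₀‖ / (r'e:ℝ)))^m = C * (a / r'e)^m * ‖w - z₀‖^m := by
    rw [mul_assoc]
    congr 1
    rw [← mul_pow]
    congr 1
    field_simp
  rw [h4] at h3
  calc ‖f w - f z₀‖ ≤ C * (a / r'e)^m * ‖w - z₀‖^m := h3
    _ ≤ (C * (a / r'e)^m + 1) * dist w z₀ ^ m := by
        rw [hdist]
        have h5 : (0:ℝ) ≤ ‖w - z₀‖^m := by positivity
        nlinarith [h5]

section Lagrange
variable {ι : Type*} [Fintype ι] [DecidableEq ι]

noncomputable def lagP (u : ι → ℂ) (v : ι → E) (z : ℂ) : E :=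
  ∑ k, ((z * (u k)⁻¹) * ∏ l ∈ Finset.univ.erase k, ((z - u l) * (u k - u l)⁻¹)) • v k

lemma lagP_zero (u : ι → ℂ) (v : ι → E) : lagP u v 0 = 0 := by
  simp [lagP]

lemma lagP_diff (u : ι → ℂ) (v : ι → E) : Differentiable ℂ (lagP u v) := by
  apply Differentiable.fun_sum
  intro k _
  apply Differentiable.smul_const
  apply Differentiable.mul
  · exact (differentiable_id.mul (differentiable_const _))
  · apply Differentiable.fun_finsetProd
    intro l _
    exact (differentiable_id.sub_const _).mul (differentiable_const _)

lemma lagP_eval (u : ι → ℂ) (v : ι → E) (hu : Function.Injective u) (hu0 : ∀ k, u k ≠ 0)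
    (k : ι) : lagP u v (u k) = v k := by
  rw [lagP, Finset.sum_eq_single k]
  · have h1 : (u k) * (u k)⁻¹ = 1 := mul_inv_cancel₀ (hu0 k)
    have h2 : ∏ l ∈ Finset.univ.erase k, ((u k - u l) * (u k - u l)⁻¹) = 1 := by
      apply Finset.prod_eq_one
      intro l hl
      have : u k ≠ u l := fun hEq => (Finset.mem_erase.mp hl).1 (hu hEq).symm
      exact mul_inv_cancel₀ (sub_ne_zero.mpr this)
    rw [h1, h2, one_mul, one_smul]
  · intro b _ hbk
    have hk : k ∈ Finset.univ.erase b := Finset.mem_erase.mpr ⟨fun h => hbk h.symm, Finset.mem_univ k⟩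
    rw [Finset.prod_eq_zero hk (by rw [sub_self, zero_mul]), mul_zero, zero_smul]
  · intro h
    exact absurd (Finset.mem_univ k) h

lemma lagP_norm_le (u : ι → ℂ) (v : ι → E) (z : ℂ) :
    ‖lagP u v z‖ ≤ ∑ k, (‖z‖ * ‖u k‖⁻¹ *
      ∏ l ∈ Finset.univ.erase k, (‖z - u l‖ * ‖u k - u l‖⁻¹)) * ‖v k‖ := by
  refine (norm_sum_le _ _).trans ?_
  apply Finset.sum_le_sum
  intro k _
  rw [norm_smul]
  apply mul_le_mul_of_nonneg_right _ (norm_nonneg _)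
  rw [norm_mul, norm_mul, norm_inv]
  apply le_of_eq
  congr 1
  rw [norm_prod]
  apply Finset.prod_congr rfl
  intro l _
  rw [norm_mul, norm_inv]

end Lagrange

lemma denom_prod_bound {k : ℕ} {m : Fin k → ℕ} (u : (Σ i : Fin k, Fin (m i)) → ℂ)
    (pi : Fin k) (pj : Fin (m pi)) {δ c : ℝ} (hδ : 0 < δ) (hc : 0 < c) (hc1 : c ≤ 1)
    (hsame : ∀ j' : Fin (m pi), j' ≠ pj → δ ≤ ‖u ⟨pi, pj⟩ - u ⟨pi, j'⟩‖)
    (hcross : ∀ l : Σ i : Fin k, Fin (m i), l.1 ≠ pi → c ≤ ‖u ⟨pi, pj⟩ - u l‖) :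
    ∏ l ∈ Finset.univ.erase ⟨pi, pj⟩, ‖u ⟨pi, pj⟩ - u l‖⁻¹ ≤
      (δ⁻¹)^(m pi - 1) * (c⁻¹)^(Fintype.card (Σ i : Fin k, Fin (m i))) := by
  classical
  set p : (Σ i : Fin k, Fin (m i)) := ⟨pi, pj⟩ with hp
  set G : (Σ i : Fin k, Fin (m i)) → ℝ := fun l => if l = p then 1 else ‖u p - u l‖⁻¹ with hG
  have hGnonneg : ∀ l, 0 ≤ G l := by
    intro l
    rw [hG]
    dsimp only
    split <;> simp
  have hGe : ∀ l ∈ Finset.univ.erase p, ‖u p - u l‖⁻¹ = G l := by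
    intro l hl
    rw [hG]
    simp only [if_neg (Finset.mem_erase.mp hl).1]
  rw [Finset.prod_congr rfl hGe, Finset.prod_erase _ (by simp [hG])]
  have hsplit : ∏ l : (Σ i : Fin k, Fin (m i)), G l
      = ∏ i' : Fin k, ∏ j' : Fin (m i'), G ⟨i', j'⟩ := by
    rw [← Finset.univ_sigma_univ, Finset.prod_sigma]
  rw [hsplit, ← Finset.mul_prod_erase Finset.univ _ (Finset.mem_univ pi)]
  have hH1 : ∏ j' : Fin (m pi), G ⟨pi, j'⟩ ≤ (δ⁻¹)^(m pi - 1) := by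
    have heq1 : ∏ j' : Fin (m pi), G ⟨pi, j'⟩ = ∏ j' ∈ Finset.univ.erase pj, G ⟨pi, j'⟩ :=
      (Finset.prod_erase (f := fun j' : Fin (m pi) => G ⟨pi, j'⟩) (a := pj) Finset.univ
        (by simp [hG, hp])).symm
    rw [heq1]
    have hcard : (Finset.univ.erase pj).card = m pi - 1 := by
      rw [Finset.card_erase_of_mem (Finset.mem_univ pj), Finset.card_univ, Fintype.card_fin]
    calc ∏ j' ∈ Finset.univ.erase pj, G ⟨pi, j'⟩ ≤ ∏ _j' ∈ Finset.univ.erase pj, δ⁻¹ := by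
          apply Finset.prod_le_prod (fun j' _ => hGnonneg _)
          intro j' hj'
          have hne : j' ≠ pj := (Finset.mem_erase.mp hj').1
          have hneq : (⟨pi, j'⟩ : Σ i : Fin k, Fin (m i)) ≠ p := by
            intro hEq
            exact hne (by simpa using (Sigma.mk.inj_iff.mp hEq).2)
          rw [hG]
          simp only [if_neg hneq]
          exact inv_anti₀ hδ (hsame j' hne)
      _ = (δ⁻¹)^(m pi - 1) := by rw [Finset.prod_const, hcard]
  have hH2 : ∏ i' ∈ Finset.univ.erase pi, ∏ j' : Fin (m i'), G ⟨i', j'⟩ ≤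
      (c⁻¹)^(Fintype.card (Σ i : Fin k, Fin (m i))) := by
    have hinner : ∀ i' ∈ Finset.univ.erase pi,
        ∏ j' : Fin (m i'), G ⟨i', j'⟩ ≤ (c⁻¹)^(m i') := by
      intro i' hi'
      have hne : i' ≠ pi := (Finset.mem_erase.mp hi').1
      have : ∀ j' : Fin (m i'), G ⟨i', j'⟩ ≤ c⁻¹ := by
        intro j'
        have hneq : (⟨i', j'⟩ : Σ i : Fin k, Fin (m i)) ≠ p := by
          intro hEq
          exact hne (Sigma.mk.inj_iff.mp hEq).1
        rw [hG]
        simp only [if_neg hneq]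
        exact inv_anti₀ hc (hcross ⟨i', j'⟩ hne)
      calc ∏ j' : Fin (m i'), G ⟨i', j'⟩ ≤ ∏ _j' : Fin (m i'), c⁻¹ :=
            Finset.prod_le_prod (fun j' _ => hGnonneg _) (fun j' _ => this j')
        _ = (c⁻¹)^(m i') := by rw [Finset.prod_const, Finset.card_univ, Fintype.card_fin]
    calc ∏ i' ∈ Finset.univ.erase pi, ∏ j' : Fin (m i'), G ⟨i', j'⟩
        ≤ ∏ i' ∈ Finset.univ.erase pi, (c⁻¹)^(m i') := by
          apply Finset.prod_le_prod
          · intro i' _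
            exact Finset.prod_nonneg fun j' _ => hGnonneg _
          · exact hinner
      _ = (c⁻¹)^(∑ i' ∈ Finset.univ.erase pi, m i') := by rw [Finset.prod_pow_eq_pow_sum]
      _ ≤ (c⁻¹)^(Fintype.card (Σ i : Fin k, Fin (m i))) := by
          apply pow_le_pow_right₀ ((one_le_inv₀ hc).mpr hc1)
          rw [Fintype.card_sigma]
          simp only [Fintype.card_fin]
          exact Finset.sum_le_sum_of_subset (Finset.erase_subset _ _)
  have h1 : (0:ℝ) ≤ ∏ j' : Fin (m pi), G ⟨pi, j'⟩ := Finset.prod_nonneg fun _ _ => hGnonneg _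
  have h2 : (0:ℝ) ≤ (δ⁻¹)^(m pi - 1) := by positivity
  exact mul_le_mul hH1 hH2 (Finset.prod_nonneg fun i' _ => Finset.prod_nonneg fun _ _ => hGnonneg _) h2

lemma key_construction {N k : ℕ} {X : Set (Fin N → ℂ)} (hX : IsOpen X)
    {f : ℂ → (Fin N → ℂ)} (hf : IsDiscIn X f)
    (z : Fin k → ℂ) (hzb : ∀ i, z i ∈ ball (0:ℂ) 1) (hz0 : ∀ i, z i ≠ 0)
    (hzinj : Function.Injective z)
    (m : Fin k → ℕ) (hm : ∀ i, 0 < m i)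
    (hder : ∀ i n, 0 < n → n < m i → iteratedDeriv n f (z i) = 0)
    {η : ℝ} (hη : 0 < η) :
    ∃ g : ℂ → (Fin N → ℂ), IsDiscIn X g ∧ g 0 = f 0 ∧
      ∃ w : (Σ i : Fin k, Fin (m i)) → ℂ, Function.Injective w ∧
        (∀ p, w p ∈ ball (0:ℂ) 1) ∧ (∀ p, w p ≠ 0) ∧
        (∀ p, g (w p) = f (z p.1)) ∧
        (∀ p, Real.log (‖w p‖) ≤ Real.log (‖z p.1‖) + η) := by
  classical
  obtain ⟨⟨U, hUopen, hUcb, hfd⟩, hfX⟩ := hf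
  have han : ∀ i, AnalyticAt ℂ f (z i) :=
    fun i => hfd.analyticAt (hUopen.mem_nhds (hUcb (ball_subset_closedBall (hzb i))))
  choose dT hdT C hC hTay using fun i => taylor_bound (han i) (hm i) (hder i)
  have hfc : ContinuousOn f (closedBall 0 1) := (hfd.continuousOn).mono hUcb
  have hcpt : IsCompact (f '' closedBall (0:ℂ) 1) :=
    (isCompact_closedBall _ _).image_of_continuousOn hfc
  obtain ⟨ε₀, hε₀, hthX⟩ := hcpt.exists_thickening_subset_open hX hfX
  set ρ : Fin k → ℝ := fun i => ‖z i‖ with hρdef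
  have hρpos : ∀ i, 0 < ρ i := fun i => norm_pos_iff.mpr (hz0 i)
  have hρlt : ∀ i, ρ i < 1 := fun i => by
    have := mem_ball_zero_iff.mp (hzb i)
    simpa [hρdef] using this
  set M : ℕ := 1 + Finset.univ.sup m with hM
  have hMpos : (0:ℝ) < M := by
    have : 0 < M := by omega
    exact_mod_cast this
  have hmM : ∀ i, m i ≤ M := fun i => by
    have := Finset.le_sup (f := m) (Finset.mem_univ i)
    omega
  -- the min constant c
  set F : Finset ℝ := insert 1 ((Finset.univ.image fun i => ρ i / 2) ∪
    ((Finset.univ.filter fun q : Fin k × Fin k => q.1 ≠ q.2).image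
      fun q => ‖z q.1 - z q.2‖ / 4)) with hFdef
  have hFne : F.Nonempty := ⟨1, Finset.mem_insert_self _ _⟩
  set c := F.min' hFne with hcdef
  have hFpos : ∀ x ∈ F, 0 < x := by
    intro x hx
    rw [hFdef] at hx
    rcases Finset.mem_insert.mp hx with h | h
    · rw [h]; norm_num
    · rcases Finset.mem_union.mp h with h | h
      · obtain ⟨i, -, hi⟩ := Finset.mem_image.mp h
        rw [← hi]
        have := hρpos i
        linarith
      · obtain ⟨q, hq, hi⟩ := Finset.mem_image.mp h
        rw [← hi]
        have hzne : z q.1 ≠ z q.2 := fun hEq => (Finset.mem_filter.mp hq).2 (hzinj hEq)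
        have := norm_pos_iff.mpr (sub_ne_zero.mpr hzne)
        linarith
  have hcpos : 0 < c := hFpos c (F.min'_mem hFne)
  have hc1 : c ≤ 1 := Finset.min'_le _ _ (Finset.mem_insert_self _ _)
  have hcρ : ∀ i, c ≤ ρ i / 2 := fun i => Finset.min'_le _ _
    (Finset.mem_insert_of_mem (Finset.mem_union_left _
      (Finset.mem_image_of_mem _ (Finset.mem_univ i))))
  have hcz : ∀ i i', i ≠ i' → c ≤ ‖z i - z i'‖ / 4 := fun i i' hne =>
    Finset.min'_le _ _ (Finset.mem_insert_of_mem (Finset.mem_union_right _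
      (Finset.mem_image_of_mem _ (Finset.mem_filter.mpr ⟨Finset.mem_univ (i,i'), hne⟩))))
  set K := Fintype.card (Σ i : Fin k, Fin (m i)) with hK
  set B : ℝ := ∑ p : (Σ i : Fin k, Fin (m i)),
    C p.1 * (M:ℝ)^(m p.1) * c⁻¹ * 3^K * (c⁻¹)^K with hB
  -- choose δ
  have htendM : Filter.Tendsto (fun δ : ℝ => δ * (M:ℝ)) (nhdsWithin 0 (Set.Ioi 0)) (nhds 0) := by
    have h0 : Filter.Tendsto (fun δ : ℝ => δ * (M:ℝ)) (nhds 0) (nhds (0 * (M:ℝ))) :=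
      (continuous_id.mul continuous_const).tendsto 0
    rw [zero_mul] at h0
    exact h0.mono_left nhdsWithin_le_nhds
  have htendB : Filter.Tendsto (fun δ : ℝ => B * δ) (nhdsWithin 0 (Set.Ioi 0)) (nhds 0) := by
    have h0 : Filter.Tendsto (fun δ : ℝ => B * δ) (nhds 0) (nhds (B * 0)) :=
      (continuous_const.mul continuous_id).tendsto 0
    rw [mul_zero] at h0
    exact h0.mono_left nhdsWithin_le_nhds
  have hev : ∀ᶠ δ in nhdsWithin (0:ℝ) (Set.Ioi 0),
      (0 < δ) ∧ δ * (M:ℝ) ≤ 1 ∧ (∀ i, δ * (M:ℝ) < dT i) ∧ δ * (M:ℝ) ≤ c ∧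
      (∀ i, δ * (M:ℝ) ≤ ρ i * (Real.exp η - 1)) ∧ (∀ i, δ * (M:ℝ) ≤ (1 - ρ i)/2) ∧ B * δ < ε₀ := by
    refine Filter.Eventually.and ?_ (Filter.Eventually.and ?_ (Filter.Eventually.and ?_
      (Filter.Eventually.and ?_ (Filter.Eventually.and ?_ (Filter.Eventually.and ?_ ?_)))))
    · exact eventually_mem_nhdsWithin
    · exact (htendM.eventually_lt_const one_pos).mono fun δ h => h.le
    · rw [Filter.eventually_all]
      intro i
      exact htendM.eventually_lt_const (hdT i)
    · exact (htendM.eventually_lt_const hcpos).mono fun δ h => h.le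
    · rw [Filter.eventually_all]
      intro i
      have hpos : 0 < ρ i * (Real.exp η - 1) := by
        have h1 : 1 < Real.exp η := by
          rw [← Real.exp_zero]
          exact Real.exp_lt_exp.mpr hη
        have := hρpos i
        nlinarith
      exact (htendM.eventually_lt_const hpos).mono fun δ h => h.le
    · rw [Filter.eventually_all]
      intro i
      have hpos : 0 < (1 - ρ i)/2 := by
        have := hρlt i
        linarith
      exact (htendM.eventually_lt_const hpos).mono fun δ h => h.le
    · exact htendB.eventually_lt_const hε₀
  obtain ⟨δ, hδpos', hδ1, hδT, hδc, hδexp, hδin, hδB⟩ := hev.exists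
  have hδpos : 0 < δ := hδpos'
  -- nodes
  set u : (Σ i : Fin k, Fin (m i)) → ℂ := fun p => z p.1 + ((δ * ((p.2:ℕ) + 1) : ℝ) : ℂ) with hudef
  have hup1 : ∀ p : (Σ i : Fin k, Fin (m i)), 0 < δ * ((p.2:ℕ) + 1) := by
    intro p
    positivity
  have hupM : ∀ p : (Σ i : Fin k, Fin (m i)), δ * ((p.2:ℕ) + 1) ≤ δ * (M:ℝ) := by
    intro p
    apply mul_le_mul_of_nonneg_left _ hδpos.le
    have h1 : (p.2:ℕ) + 1 ≤ m p.1 := p.2.2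
    have h2 : m p.1 ≤ M := hmM p.1
    have h3 : (p.2:ℕ) + 1 ≤ M := le_trans h1 h2
    exact_mod_cast h3
  have hudist : ∀ p, ‖u p - z p.1‖ = δ * ((p.2:ℕ) + 1) := by
    intro p
    rw [hudef]
    simp only [add_sub_cancel_left, Complex.norm_real, Real.norm_eq_abs]
    exact abs_of_pos (hup1 p)
  have huabs_le : ∀ p, ‖u p‖ ≤ ρ p.1 + δ * (M:ℝ) := by
    intro p
    have h1 : ‖u p‖ ≤ ‖z p.1‖ + ‖u p - z p.1‖ := by
      have := norm_add_le (z p.1) (u p - z p.1)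
      simpa using this
    rw [hudist p] at h1
    have := hupM p
    simp only [hρdef]
    linarith
  have huabs_ge : ∀ p, ρ p.1 / 2 ≤ ‖u p‖ := by
    intro p
    have h1 : ‖z p.1‖ ≤ ‖u p‖ + ‖u p - z p.1‖ := by
      have h2 : z p.1 = u p - (u p - z p.1) := by ring
      calc ‖z p.1‖ = ‖u p - (u p - z p.1)‖ := by rw [← h2]
        _ ≤ ‖u p‖ + ‖u p - z p.1‖ := by
            have := norm_sub_le (u p) (u p - z p.1)
            exact this
    rw [hudist p] at h1
    have h3 := hupM p
    have h4 := hcρ p.1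
    have h5 : δ * (M:ℝ) ≤ c := hδc
    simp only [hρdef] at *
    linarith
  have hu0 : ∀ p, u p ≠ 0 := by
    intro p hEq
    have h1 := huabs_ge p
    rw [hEq] at h1
    simp only [norm_zero] at h1
    have := hρpos p.1
    linarith
  have huball : ∀ p, u p ∈ ball (0:ℂ) 1 := by
    intro p
    rw [mem_ball_zero_iff]
    have h1 := huabs_le p
    have h2 := hδin p.1
    have h3 := hρlt p.1
    linarith
  have hulog : ∀ p, Real.log (‖u p‖) ≤ Real.log (‖z p.1‖) + η := by
    intro p
    have h1 : ‖u p‖ ≤ ρ p.1 * Real.exp η := by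
      have ha := huabs_le p
      have hb := hδexp p.1
      have : ρ p.1 * (Real.exp η - 1) = ρ p.1 * Real.exp η - ρ p.1 := by ring
      linarith [this ▸ hb]
    have hpos : 0 < ‖u p‖ := by
      have := huabs_ge p
      have := hρpos p.1
      linarith
    have h2 := Real.log_le_log hpos h1
    rwa [Real.log_mul (hρpos p.1).ne' (Real.exp_ne_zero η), Real.log_exp] at h2
  have hsep : ∀ p q : (Σ i : Fin k, Fin (m i)), p.1 ≠ q.1 →
      2*c ≤ ‖u p - u q‖ := by
    intro p q hne
    have hzz : 4*c ≤ ‖z p.1 - z q.1‖ := by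
      have := hcz p.1 q.1 hne
      linarith
    have hA : ‖z p.1 - z q.1‖ ≤ ‖u p - u q‖
        + ‖u p - z p.1‖ + ‖u q - z q.1‖ := by
      have h2 : z p.1 - z q.1 = (u p - u q) - (u p - z p.1) + (u q - z q.1) := by ring
      calc ‖z p.1 - z q.1‖
          = ‖(u p - u q) - (u p - z p.1) + (u q - z q.1)‖ := by rw [← h2]
        _ ≤ ‖(u p - u q) - (u p - z p.1)‖ + ‖u q - z q.1‖ :=
            norm_add_le _ _
        _ ≤ ‖u p - u q‖ + ‖u p - z p.1‖ + ‖u q - z q.1‖ := by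
            have := norm_sub_le (u p - u q) (u p - z p.1)
            linarith
    rw [hudist p, hudist q] at hA
    have h3 := hupM p
    have h4 := hupM q
    have h5 : δ * (M:ℝ) ≤ c := hδc
    linarith
  have hsame : ∀ (i : Fin k) (j j' : Fin (m i)), j ≠ j' →
      δ ≤ ‖u ⟨i,j⟩ - u ⟨i,j'⟩‖ := by
    intro i j j' hne
    have hrepr : u ⟨i,j⟩ - u ⟨i,j'⟩ = (((δ * ((j:ℕ)+1) - δ * ((j':ℕ)+1)) : ℝ) : ℂ) := by
      rw [hudef]
      push_cast
      ring
    rw [hrepr, Complex.norm_real, Real.norm_eq_abs]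
    have h1 : (1:ℝ) ≤ |((j:ℕ):ℝ) - ((j':ℕ):ℝ)| := by
      have hne' : ((j:ℕ):ℤ) ≠ ((j':ℕ):ℤ) := by
        intro hEq
        apply hne
        apply Fin.ext
        exact_mod_cast hEq
      have h2 := Int.one_le_abs (sub_ne_zero.mpr hne')
      have h3 : ((1:ℤ):ℝ) ≤ ((|(j:ℕ) - ((j':ℕ):ℤ)| : ℤ) : ℝ) := by exact_mod_cast h2
      rw [Int.cast_abs] at h3
      push_cast at h3
      exact h3
    have heq2 : δ * ((j:ℕ)+1) - δ * ((j':ℕ)+1) = δ * (((j:ℕ):ℝ) - ((j':ℕ):ℝ)) := by ring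
    rw [heq2, abs_mul, abs_of_pos hδpos]
    exact le_mul_of_one_le_right hδpos.le h1
  have huinj : Function.Injective u := by
    intro p q hEq
    by_cases h1 : p.1 = q.1
    · obtain ⟨pi, pj⟩ := p
      obtain ⟨qi, qj⟩ := q
      simp only at h1
      subst h1
      by_contra hne2
      have hjne : pj ≠ qj := by
        intro hEq2
        exact hne2 (by rw [hEq2])
      have h2 := hsame pi pj qj hjne
      rw [hEq, sub_self] at h2
      simp only [norm_zero] at h2
      linarith
    · have h2 := hsep p q h1
      rw [hEq, sub_self] at h2
      simp only [norm_zero] at h2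
      linarith
  set v : (Σ i : Fin k, Fin (m i)) → (Fin N → ℂ) := fun p => f (z p.1) - f (u p) with hvdef
  have hvb : ∀ p, ‖v p‖ ≤ C p.1 * (δ * (M:ℝ))^(m p.1) := by
    intro p
    rw [hvdef]
    simp only
    rw [norm_sub_rev]
    have hd : dist (u p) (z p.1) ≤ dT p.1 := by
      rw [Complex.dist_eq, hudist p]
      exact le_trans (hupM p) (hδT p.1).le
    calc ‖f (u p) - f (z p.1)‖ ≤ C p.1 * dist (u p) (z p.1) ^ (m p.1) := hTay p.1 (u p) hd
      _ ≤ C p.1 * (δ * (M:ℝ))^(m p.1) := by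
          apply mul_le_mul_of_nonneg_left _ (hC p.1).le
          apply pow_le_pow_left₀ dist_nonneg
          rw [Complex.dist_eq, hudist p]
          exact hupM p
  -- the estimate
  have hPsmall : ∀ w : ℂ, ‖w‖ ≤ 1 → ‖lagP u v w‖ ≤ B * δ := by
    intro w hw1
    refine (lagP_norm_le u v w).trans ?_
    rw [hB, Finset.sum_mul]
    apply Finset.sum_le_sum
    intro p _
    have hb1 : ‖u p‖⁻¹ ≤ c⁻¹ := by
      apply inv_anti₀ hcpos
      calc c ≤ ρ p.1 / 2 := hcρ p.1
        _ ≤ ‖u p‖ := huabs_ge p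
    have hnum : ∏ l ∈ Finset.univ.erase p, ‖w - u l‖ ≤ 3^K := by
      calc ∏ l ∈ Finset.univ.erase p, ‖w - u l‖ ≤ ∏ _l ∈ Finset.univ.erase p, (3:ℝ) := by
            apply Finset.prod_le_prod (fun l _ => norm_nonneg _)
            intro l _
            calc ‖w - u l‖ ≤ ‖w‖ + ‖u l‖ := norm_sub_le _ _
              _ ≤ 1 + (ρ l.1 + δ * (M:ℝ)) := by
                  have h2 : ‖u l‖ ≤ ρ l.1 + δ * (M:ℝ) := by
                    exact huabs_le l
                  linarith
              _ ≤ 3 := by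
                  have h3 := hρlt l.1
                  linarith
        _ = 3^((Finset.univ.erase p).card) := Finset.prod_const 3
        _ ≤ 3^K := by
            apply pow_le_pow_right₀ (by norm_num)
            rw [hK, ← Finset.card_univ]
            exact Finset.card_le_card (Finset.erase_subset _ _)
    have hden : ∏ l ∈ Finset.univ.erase p, ‖u p - u l‖⁻¹ ≤ (δ⁻¹)^(m p.1 - 1) * (c⁻¹)^K := by
      obtain ⟨pi, pj⟩ := p
      refine denom_prod_bound u pi pj hδpos hcpos hc1 ?_ ?_
      · intro j' hj'
        exact hsame pi pj j' (fun hEq => hj' hEq.symm)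
      · intro l hl
        have h2 := hsep ⟨pi, pj⟩ l (fun hEq => hl hEq.symm)
        linarith
    have hprod_split : ∏ l ∈ Finset.univ.erase p, (‖w - u l‖ * ‖u p - u l‖⁻¹)
        = (∏ l ∈ Finset.univ.erase p, ‖w - u l‖) * ∏ l ∈ Finset.univ.erase p, ‖u p - u l‖⁻¹ :=
      Finset.prod_mul_distrib
    have hnn1 : (0:ℝ) ≤ ∏ l ∈ Finset.univ.erase p, ‖u p - u l‖⁻¹ :=
      Finset.prod_nonneg fun l _ => inv_nonneg.mpr (norm_nonneg _)
    have hnn2 : (0:ℝ) ≤ ∏ l ∈ Finset.univ.erase p, ‖w - u l‖ :=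
      Finset.prod_nonneg fun l _ => norm_nonneg _
    have h3K : (0:ℝ) ≤ 3^K := by positivity
    have hcinv : (0:ℝ) ≤ c⁻¹ := inv_nonneg.mpr hcpos.le
    have hprod_le : ∏ l ∈ Finset.univ.erase p, (‖w - u l‖ * ‖u p - u l‖⁻¹)
        ≤ 3^K * ((δ⁻¹)^(m p.1 - 1) * (c⁻¹)^K) := by
      rw [hprod_split]
      exact mul_le_mul hnum hden hnn1 h3K
    have hfac1 : ‖w‖ * ‖u p‖⁻¹ ≤ c⁻¹ := by
      calc ‖w‖ * ‖u p‖⁻¹ ≤ 1 * c⁻¹ :=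
            mul_le_mul hw1 hb1 (inv_nonneg.mpr (norm_nonneg _)) zero_le_one
        _ = c⁻¹ := one_mul _
    have hbig : ‖w‖ * ‖u p‖⁻¹ * ∏ l ∈ Finset.univ.erase p, (‖w - u l‖ * ‖u p - u l‖⁻¹)
        ≤ c⁻¹ * (3^K * ((δ⁻¹)^(m p.1 - 1) * (c⁻¹)^K)) := by
      apply mul_le_mul hfac1 hprod_le
      · exact Finset.prod_nonneg fun l _ =>
          mul_nonneg (norm_nonneg _) (inv_nonneg.mpr (norm_nonneg _))
      · exact hcinv
    have hvnn : (0:ℝ) ≤ ‖v p‖ := norm_nonneg _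
    have hlhs_nn : (0:ℝ) ≤ ‖w‖ * ‖u p‖⁻¹ * ∏ l ∈ Finset.univ.erase p, (‖w - u l‖ * ‖u p - u l‖⁻¹) := by
      apply mul_nonneg (mul_nonneg (norm_nonneg _) (inv_nonneg.mpr (norm_nonneg _)))
      exact Finset.prod_nonneg fun l _ =>
        mul_nonneg (norm_nonneg _) (inv_nonneg.mpr (norm_nonneg _))
    have hrhs_nn : (0:ℝ) ≤ c⁻¹ * (3^K * ((δ⁻¹)^(m p.1 - 1) * (c⁻¹)^K)) := by
      apply mul_nonneg hcinv
      apply mul_nonneg h3K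
      apply mul_nonneg _ (pow_nonneg hcinv K)
      exact pow_nonneg (inv_nonneg.mpr hδpos.le) _
    have hterm : (‖w‖ * ‖u p‖⁻¹ * ∏ l ∈ Finset.univ.erase p, (‖w - u l‖ * ‖u p - u l‖⁻¹)) * ‖v p‖
        ≤ (c⁻¹ * (3^K * ((δ⁻¹)^(m p.1 - 1) * (c⁻¹)^K))) * (C p.1 * (δ * (M:ℝ))^(m p.1)) :=
      mul_le_mul hbig (hvb p) hvnn hrhs_nn
    refine hterm.trans (le_of_eq ?_)
    obtain ⟨n, hn⟩ : ∃ n, m p.1 = n + 1 := ⟨m p.1 - 1, by have := hm p.1; omega⟩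
    rw [hn]
    simp only [Nat.add_sub_cancel]
    have hδne : δ ≠ 0 := hδpos.ne'
    simp only [inv_pow]
    field_simp
    ring
  set g : ℂ → (Fin N → ℂ) := fun w => f w + lagP u v w with hgdef
  refine ⟨g, ⟨⟨U, hUopen, hUcb, hfd.add (lagP_diff u v).differentiableOn⟩, ?_⟩, ?_, u,
    huinj, huball, hu0, ?_, hulog⟩
  · rintro y ⟨w, hw, rfl⟩
    apply hthX
    rw [Metric.mem_thickening_iff]
    refine ⟨f w, Set.mem_image_of_mem f hw, ?_⟩
    rw [hgdef]
    simp only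
    rw [dist_eq_norm, add_sub_cancel_left]
    have hw1 : ‖w‖ ≤ 1 := by
      rw [← dist_zero_right]
      exact mem_closedBall.mp hw
    exact lt_of_le_of_lt (hPsmall w hw1) hδB
  · rw [hgdef]
    simp only
    rw [lagP_zero, add_zero]
  · intro p
    rw [hgdef]
    simp only
    rw [lagP_eval u v huinj hu0 p, hvdef]
    simp only
    rw [add_sub_cancel]

lemma ofReal_le_ofReal_max (x : ℝ) : ENNReal.ofReal x = ENNReal.ofReal (max x 0) := by
  rcases le_total x 0 with h | h
  · rw [ENNReal.ofReal_eq_zero.mpr h, max_eq_right h, ENNReal.ofReal_zero]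
  · rw [max_eq_left h]

lemma ofReal_sum_le {ι : Type*} (s : Finset ι) (x : ι → ℝ) :
    ENNReal.ofReal (∑ i ∈ s, x i) ≤ ∑ i ∈ s, ENNReal.ofReal (x i) := by
  calc ENNReal.ofReal (∑ i ∈ s, x i) ≤ ENNReal.ofReal (∑ i ∈ s, max (x i) 0) :=
        ENNReal.ofReal_le_ofReal (Finset.sum_le_sum fun i _ => le_max_left _ _)
    _ = ∑ i ∈ s, ENNReal.ofReal (max (x i) 0) :=
        ENNReal.ofReal_sum_of_nonneg fun i _ => le_max_right _ _
    _ = ∑ i ∈ s, ENNReal.ofReal (x i) := by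
        apply Finset.sum_congr rfl
        intro i _
        rw [← ofReal_le_ofReal_max]

lemma ereal_glue {Ev : EReal} {S : ℝ≥0∞} (hE0 : Ev ≤ 0)
    (h : ∀ r : ℝ≥0∞, r < S → Ev ≤ -(r : EReal)) : Ev ≤ -(S : EReal) := by
  have h0E : (0:EReal) ≤ -Ev := by
    rw [← neg_zero]
    exact EReal.neg_le_neg_iff.mpr hE0
  have key : (S : EReal) ≤ -Ev := by
    apply le_of_forall_lt
    intro cc hcc
    obtain ⟨d, hd1, hd2⟩ := EReal.exists_between_coe_real hcc
    rcases le_or_gt (d:EReal) 0 with hd0 | hd0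
    · exact lt_of_lt_of_le hd1 (le_trans hd0 h0E)
    · have hdr : 0 ≤ d := by
        have := hd0.le
        exact_mod_cast this
      set r : ℝ≥0∞ := ENNReal.ofReal d with hrdef
      have hcoe : ((r : ℝ≥0∞) : EReal) = (d : EReal) := by
        rw [hrdef, EReal.coe_ennreal_ofReal, max_eq_left hdr]
      have hrS : r < S := by
        rw [← EReal.coe_ennreal_lt_coe_ennreal_iff, hcoe]
        exact hd2
      have := EReal.le_neg_of_le_neg (h r hrS)
      rw [hcoe] at this
      exact lt_of_lt_of_le hd1 this
  exact EReal.le_neg_of_le_neg key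


/-- the Lelong and reduced Lelong functionals have the same envelope on an open
set in affine space. -/
theorem lelong_envelope_eq_reduced {N : ℕ} (X : Set (Fin N → ℂ)) (hX : IsOpen X)
    (α : (Fin N → ℂ) → ℝ) (hα : ∀ x, 0 ≤ α x) :
    ∀ x ∈ X, envelopeIn X (lelongFunctional α) x = envelopeIn X (reducedLelongFunctional α) x := by
  intro x hx
  classical
  have hconst : (fun _ : ℂ => x) ∈ {f : ℂ → (Fin N → ℂ) | IsDiscIn X f ∧ f 0 = x} := by
    refine ⟨⟨⟨univ, isOpen_univ, subset_univ _, differentiableOn_const _⟩, ?_⟩, rfl⟩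
    rintro y ⟨wq, -, rfl⟩
    exact hx
  rw [envelopeIn, envelopeIn]
  apply le_antisymm
  · apply le_sInf
    rintro b ⟨f, hf, rfl⟩
    refine le_trans (sInf_le (Set.mem_image_of_mem _ hf)) ?_
    rw [lelongFunctional, reducedLelongFunctional]
    apply EReal.neg_le_neg_iff.mpr
    apply EReal.coe_ennreal_le_coe_ennreal_iff.mpr
    apply ENNReal.tsum_le_tsum
    intro a
    calc ENNReal.ofReal (α (f ↑a)) * negLogE ↑a
        = ENNReal.ofReal (α (f ↑a)) * 1 * negLogE ↑a := by rw [mul_one]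
      _ ≤ ENNReal.ofReal (α (f ↑a)) * multE f ↑a * negLogE ↑a :=
          mul_le_mul_left (mul_le_mul_right (one_le_multE f ↑a) _) _
  · apply le_sInf
    rintro b ⟨f, ⟨hfdisc, hf0⟩, rfl⟩
    by_cases hαx : α x = 0
    swap
    · have hmem0 : (0:ℂ) ∈ ball (0:ℂ) 1 := Metric.mem_ball_self one_pos
      have htop : (∑' zb : ball (0:ℂ) 1,
          ENNReal.ofReal (α ((fun _ : ℂ => x) ↑zb)) * negLogE ↑zb) = ⊤ := by
        rw [eq_top_iff]
        refine le_trans ?_ (ENNReal.le_tsum (⟨0, hmem0⟩ : ball (0:ℂ) 1))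
        have h1 : negLogE (0:ℂ) = ⊤ := by rw [negLogE, if_pos rfl]
        have h2 : ENNReal.ofReal (α x) ≠ 0 := by
          rw [ne_eq, ENNReal.ofReal_eq_zero, not_le]
          exact lt_of_le_of_ne (hα x) (Ne.symm hαx)
        show (⊤:ℝ≥0∞) ≤ ENNReal.ofReal (α x) * negLogE (0:ℂ)
        rw [h1, ENNReal.mul_top h2]
      have hbot : reducedLelongFunctional α (fun _ : ℂ => x) = ⊥ := by
        rw [reducedLelongFunctional, htop]
        simp
      refine le_trans (sInf_le (Set.mem_image_of_mem _ hconst)) ?_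
      rw [hbot]
      exact bot_le
    · rw [lelongFunctional]
      apply ereal_glue
      · refine le_trans (sInf_le (Set.mem_image_of_mem _ ⟨hfdisc, hf0⟩)) ?_
        rw [reducedLelongFunctional]
        exact le_trans (EReal.neg_le_neg_iff.mpr (EReal.coe_ennreal_nonneg _)) (le_of_eq neg_zero)
      · intro r hr
        obtain ⟨U, hUopen, hUcb, hfd⟩ := hfdisc.1
        have hfX := hfdisc.2
        by_cases hconstball : ∀ wq ∈ ball (0:ℂ) 1, f wq = f 0
        · exfalso
          have hS0 : (∑' zb : ball (0:ℂ) 1,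
              ENNReal.ofReal (α (f ↑zb)) * multE f ↑zb * negLogE ↑zb) = 0 := by
            apply ENNReal.tsum_eq_zero.mpr
            intro a
            have hz : α (f ↑a) = 0 := by rw [hconstball ↑a a.2, hf0]; exact hαx
            rw [hz, ENNReal.ofReal_zero, zero_mul, zero_mul]
          rw [hS0] at hr
          exact absurd hr (by simp)
        · push_neg at hconstball
          obtain ⟨w₀, hw₀b, hw₀ne⟩ := hconstball
          have hmne : ∀ zq ∈ ball (0:ℂ) 1, multE f zq ≠ ⊤ := by
            intro zq hzq hEq
            have hcb := eq_const_on_ball hUopen hUcb hfd hzq (multE_top hEq)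
            exact hw₀ne ((hcb w₀ hw₀b).trans (hcb 0 (Metric.mem_ball_self one_pos)).symm)
          rw [ENNReal.tsum_eq_iSup_sum] at hr
          obtain ⟨Fs, hFs0⟩ := lt_iSup_iff.mp hr
          set T : ball (0:ℂ) 1 → ℝ≥0∞ :=
            fun a => ENNReal.ofReal (α (f ↑a)) * multE f ↑a * negLogE ↑a with hTdef
          have hFs : r < ∑ a ∈ Fs, T a := hFs0
          set Fs' : Finset (ball (0:ℂ) 1) := Fs.filter (fun a => T a ≠ 0) with hFs'def
          have hFssum : r < ∑ a ∈ Fs', T a := by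
            rwa [hFs'def, Finset.sum_filter_ne_zero]
          set kk := Fs'.card with hkk
          set e : Fin kk ≃ {a // a ∈ Fs'} := Fs'.equivFin.symm with he
          set zz : Fin kk → ℂ := fun i => ((e i : ball (0:ℂ) 1) : ℂ) with hzz
          have hzzmem : ∀ i, zz i ∈ ball (0:ℂ) 1 := fun i => ((e i : ball (0:ℂ) 1)).2
          have hzzinj : Function.Injective zz := by
            intro i j hEq
            apply e.injective
            apply Subtype.ext
            apply Subtype.ext
            exact hEq
          have hTpos : ∀ i, T ↑(e i) ≠ 0 := fun i => (Finset.mem_filter.mp (e i).2).2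
          have hapos : ∀ i, 0 < α (f (zz i)) := by
            intro i
            have h1 := hTpos i
            have h2 := mul_ne_zero_iff.mp h1
            have h3 := mul_ne_zero_iff.mp h2.1
            have h4 : ¬ (α (f (zz i)) ≤ 0) := fun hle => h3.1 (ENNReal.ofReal_eq_zero.mpr hle)
            exact not_le.mp h4
          have hzz0 : ∀ i, zz i ≠ 0 := by
            intro i hEq
            have h1 := hapos i
            rw [hEq, hf0, hαx] at h1
            exact lt_irrefl 0 h1
          choose mm hmmE hmmpos hmder using fun i => exists_nat_multE (hmne (zz i) (hzzmem i))
          set L : Fin kk → ℝ := fun i => -Real.log (‖zz i‖) with hL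
          have habs1 : ∀ i, ‖zz i‖ < 1 := fun i => by
            have h1 := mem_ball_zero_iff.mp (hzzmem i)
            exact h1
          have habs0 : ∀ i, 0 < ‖zz i‖ := fun i => norm_pos_iff.mpr (hzz0 i)
          have hLpos : ∀ i, 0 < L i := fun i => by
            rw [hL]
            simp only [neg_pos]
            exact Real.log_neg (habs0 i) (habs1 i)
          have hTval : ∀ i, T ↑(e i) = ENNReal.ofReal (α (f (zz i)) * (mm i) * L i) := by
            intro i
            have hneg : negLogE (zz i) = ENNReal.ofReal (L i) := by
              rw [negLogE, if_neg (hzz0 i)]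
            calc T ↑(e i)
                = ENNReal.ofReal (α (f (zz i))) * multE f (zz i) * negLogE (zz i) := rfl
              _ = ENNReal.ofReal (α (f (zz i))) * (mm i : ℝ≥0∞) * ENNReal.ofReal (L i) := by
                  rw [hmmE i, hneg]
              _ = ENNReal.ofReal (α (f (zz i)) * (mm i) * L i) := by
                  rw [← ENNReal.ofReal_natCast (mm i), ← ENNReal.ofReal_mul (hα _),
                    ← ENNReal.ofReal_mul (mul_nonneg (hα _) (Nat.cast_nonneg _))]
          have hsum_eq : ∑ a ∈ Fs', T a = ∑ i : Fin kk, T ↑(e i) := by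
            rw [← Finset.sum_coe_sort Fs' T]
            exact (Equiv.sum_comp e (fun b => T ↑b)).symm
          rw [hsum_eq] at hFssum
          set TR : Fin kk → ℝ := fun i => α (f (zz i)) * (mm i) * L i with hTR
          have hTRnn : ∀ i, 0 ≤ TR i := fun i =>
            mul_nonneg (mul_nonneg (hα _) (Nat.cast_nonneg _)) (hLpos i).le
          have hFsum2 : r < ENNReal.ofReal (∑ i, TR i) := by
            rw [ENNReal.ofReal_sum_of_nonneg (fun i _ => hTRnn i)]
            calc r < ∑ i : Fin kk, T ↑(e i) := hFssum
              _ = ∑ i : Fin kk, ENNReal.ofReal (TR i) :=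
                  Finset.sum_congr rfl (fun i _ => hTval i)
          have hrne : r ≠ ⊤ := hFsum2.ne_top
          have hrlt : r.toReal < ∑ i, TR i := by
            rw [← ENNReal.lt_ofReal_iff_toReal_lt hrne]
            exact hFsum2
          set D : ℝ := ∑ i, α (f (zz i)) * (mm i) with hD
          have hDnn : 0 ≤ D :=
            Finset.sum_nonneg fun i _ => mul_nonneg (hα _) (Nat.cast_nonneg _)
          set η : ℝ := ((∑ i, TR i) - r.toReal) / (D + 1) with hηdef
          have hηpos : 0 < η := div_pos (by linarith) (by linarith)
          have hkey : r.toReal ≤ ∑ i, (mm i : ℝ) * (α (f (zz i)) * (L i - η)) := by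
            have hpt : ∀ i ∈ Finset.univ, (mm i:ℝ) * (α (f (zz i)) * (L i - η))
                = TR i - η * (α (f (zz i)) * (mm i)) := by
              intro i _
              rw [hTR]
              ring
            rw [Finset.sum_congr rfl hpt, Finset.sum_sub_distrib, ← Finset.mul_sum]
            have hηD : η * D ≤ (∑ i, TR i) - r.toReal := by
              rw [hηdef, div_mul_eq_mul_div, div_le_iff₀ (by linarith)]
              nlinarith
            have hsum_eq2 : ∑ i, α (f (zz i)) * (mm i:ℝ) = D := hD.symm
            rw [hsum_eq2]
            linarith
          obtain ⟨g, hgdisc, hg0, ww, hwinj, hwball, hw0, hgw, hwlog⟩ :=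
            key_construction hX ⟨⟨U, hUopen, hUcb, hfd⟩, hfX⟩ zz hzzmem hzz0 hzzinj mm hmmpos
              (fun i n hn1 hn2 => hmder i n hn1 hn2) hηpos
          have hgmem : reducedLelongFunctional α g ∈
              reducedLelongFunctional α '' {f | IsDiscIn X f ∧ f 0 = x} :=
            Set.mem_image_of_mem _ ⟨hgdisc, by rw [hg0, hf0]⟩
          refine le_trans (sInf_le hgmem) ?_
          rw [reducedLelongFunctional]
          apply EReal.neg_le_neg_iff.mpr
          apply EReal.coe_ennreal_le_coe_ennreal_iff.mpr
          set W : Finset (ball (0:ℂ) 1) := Finset.univ.image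
            (fun p : (Σ i : Fin kk, Fin (mm i)) => (⟨ww p, hwball p⟩ : ball (0:ℂ) 1)) with hW
          have hWinj : ∀ p ∈ Finset.univ, ∀ q ∈ Finset.univ,
              (fun p : (Σ i : Fin kk, Fin (mm i)) => (⟨ww p, hwball p⟩ : ball (0:ℂ) 1)) p =
              (fun p => (⟨ww p, hwball p⟩ : ball (0:ℂ) 1)) q → p = q := by
            intro p _ q _ hEq
            exact hwinj (congrArg Subtype.val hEq)
          calc r = ENNReal.ofReal r.toReal := (ENNReal.ofReal_toReal hrne).symm
            _ ≤ ENNReal.ofReal (∑ i, (mm i:ℝ) * (α (f (zz i)) * (L i - η))) :=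
                ENNReal.ofReal_le_ofReal hkey
            _ ≤ ∑ i, ENNReal.ofReal ((mm i:ℝ) * (α (f (zz i)) * (L i - η))) :=
                ofReal_sum_le _ _
            _ = ∑ i : Fin kk, (mm i : ℝ≥0∞) * ENNReal.ofReal (α (f (zz i)) * (L i - η)) := by
                apply Finset.sum_congr rfl
                intro i _
                rw [ENNReal.ofReal_mul (Nat.cast_nonneg _), ENNReal.ofReal_natCast]
            _ = ∑ p : (Σ i : Fin kk, Fin (mm i)),
                ENNReal.ofReal (α (f (zz p.1)) * (L p.1 - η)) := by
                rw [← Finset.univ_sigma_univ, Finset.sum_sigma]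
                apply Finset.sum_congr rfl
                intro i _
                show (mm i : ℝ≥0∞) * ENNReal.ofReal (α (f (zz i)) * (L i - η))
                  = ∑ _j : Fin (mm i), ENNReal.ofReal (α (f (zz i)) * (L i - η))
                rw [Finset.sum_const, Finset.card_univ, Fintype.card_fin, nsmul_eq_mul]
            _ ≤ ∑ p : (Σ i : Fin kk, Fin (mm i)),
                ENNReal.ofReal (α (g (ww p))) * negLogE (ww p) := by
                apply Finset.sum_le_sum
                intro p _
                rw [hgw p, ENNReal.ofReal_mul (hα _)]
                apply mul_le_mul_right
                rw [negLogE, if_neg (hw0 p)]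
                apply ENNReal.ofReal_le_ofReal
                have h5 := hwlog p
                have h6 : L p.1 = -Real.log (‖zz p.1‖) := rfl
                rw [h6]
                linarith
            _ = ∑ a ∈ W, ENNReal.ofReal (α (g ↑a)) * negLogE ↑a := by
                rw [hW, Finset.sum_image hWinj]
            _ ≤ ∑' a : ball (0:ℂ) 1, ENNReal.ofReal (α (g ↑a)) * negLogE ↑a :=
                ENNReal.sum_le_tsum W
end

section
/- Let D_r ⊂ ℂ be the disc of radius r > 1, let J₁,…,J_m be pairwise disjoint closed arcs in the unit circle 𝕋. Then the compact set L = (𝔻̄ × {0}) ∪ ⋃_{j=1}^m (J_j × 𝔻̄) ⊂ ℂ² is polynomially convex. -/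
/-!
Let `K = ⋃ⱼ Jⱼ ⊆ 𝕋`. Finitely many disjoint closed proper arcs cannot cover the connected circle,
so `K` misses a point of `𝕋`, and therefore `ℂ \ K` is connected. For the coordinate function `x`
in the uniform closure `A` of the polynomials in `C(K)`, the boundary of its spectrum in `A` lies in
its spectrum `K` in `C(K)`; as `ℂ \ K` is connected and the spectrum is bounded, the two spectra
agree. Hence `1 / (z - x)` is a uniform limit of polynomials on `K` for `z ∉ K`, which yields a
polynomial `Q` with `Q z = 1` and `|Q|` as small as we like on `K`.

A point `z ∉ L` of the bidisc has `z₂ ≠ 0` and `z₁ ∉ K`; taking `|Q| < |z₂|` on `K`, the polynomial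
`w₂ Q(w₁)` vanishes on `𝔻̄ × {0}`, is smaller than `|z₂|` on `K × 𝔻̄`, and equals `z₂` at `z`.
-/

open Metric Set

/-- A compact set `K ⊆ ℂ²` is polynomially convex: every point outside `K` is separated from
`K` by the modulus of a polynomial (for compact `K`, `sup_K |p|` is attained, so this is the
usual definition of coinciding with the polynomial hull). -/
def PolynomiallyConvex (K : Set (ℂ × ℂ)) : Prop :=
  ∀ z ∉ K, ∃ p : MvPolynomial (Fin 2) ℂ,
    ∀ w ∈ K, ‖MvPolynomial.eval ![w.1, w.2] p‖ <
      ‖MvPolynomial.eval ![z.1, z.2] p‖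

open Polynomial

theorem exists_resolvent_mem_closure_polynomialFunctions {K : Set ℂ} [CompactSpace K]
    (hKc : IsPreconnected Kᶜ) {z : ℂ} (hz : z ∉ K) :
    ∃ g ∈ (polynomialFunctions K).topologicalClosure, ∀ x : K, (z - x) * g x = 1 := by
  set S := (polynomialFunctions K).topologicalClosure
  have : IsClosed (S : Set C(K, ℂ)) := (polynomialFunctions K).isClosed_topologicalClosure
  let f : S := ⟨toContinuousMapOnAlgHom K X, (polynomialFunctions K).le_topologicalClosure
    (Subalgebra.mem_map.mpr ⟨X, Algebra.mem_top, rfl⟩)⟩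
  have hσ : spectrum ℂ (f : C(K, ℂ)) = K := by
    rw [ContinuousMap.spectrum_eq_range]
    ext x
    simp [f]
  have hunit : IsUnit (algebraMap ℂ S z - f) := by
    rw [← spectrum.notMem_iff, Subalgebra.spectrum_eq_of_isPreconnected_compl S f (by rwa [hσ]),
      hσ]
    exact hz
  obtain ⟨u, hu⟩ := hunit
  refine ⟨(u⁻¹ : Sˣ), (u⁻¹ : Sˣ).1.2, fun x => ?_⟩
  have := congr_arg (fun g : S => (g : C(K, ℂ)) x) u.mul_inv
  simp only [hu] at this
  simpa [f] using this

theorem exists_polynomial_eval_eq_one_norm_lt {K : Set ℂ} (hK : IsCompact K)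
    (hKc : IsPreconnected Kᶜ) {z : ℂ} (hz : z ∉ K) {δ : ℝ} (hδ : 0 < δ) :
    ∃ Q : ℂ[X], Q.eval z = 1 ∧ ∀ x ∈ K, ‖Q.eval x‖ < δ := by
  have : CompactSpace K := isCompact_iff_compactSpace.mp hK
  obtain ⟨g, hg, hzg⟩ := exists_resolvent_mem_closure_polynomialFunctions hKc hz
  set φ := toContinuousMapOnAlgHom K
  let defect : C(K, ℂ) → C(K, ℂ) := fun q => 1 - φ (C z - X) * q
  have hopen : IsOpen {q | ‖defect q‖ < δ} := isOpen_lt (by fun_prop) continuous_const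
  have hg0 : defect g = 0 := by
    ext x
    simp [defect, φ, hzg x]
  rw [← SetLike.mem_coe, Subalgebra.topologicalClosure_coe, _root_.mem_closure_iff] at hg
  obtain ⟨_, hq, p, -, rfl⟩ := hg _ hopen (by simpa [hg0] using hδ)
  refine ⟨1 - (C z - X) * p, by simp, fun x hx => ?_⟩
  calc ‖(1 - (C z - X) * p).eval x‖ = ‖defect (φ p) ⟨x, hx⟩‖ := by simp [defect, φ]
    _ ≤ ‖defect (φ p)‖ := ContinuousMap.norm_coe_le_norm _ _
    _ < δ := hq

theorem Complex.isPreconnected_compl_closedBall (r : ℝ) :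
    IsPreconnected (closedBall (0 : ℂ) r)ᶜ := by
  have hpolar : (closedBall (0 : ℂ) r)ᶜ =
      (fun p : ℝ × ℝ => p.1 * Complex.exp (p.2 * Complex.I)) '' (Ioi r ×ˢ univ) := by
    ext w
    simp only [mem_compl_iff, mem_closedBall_zero_iff, not_le, mem_image, mem_prod, mem_Ioi,
      mem_univ, and_true, Prod.exists]
    constructor
    · exact fun hw => ⟨‖w‖, w.arg, hw, Complex.norm_mul_exp_arg_mul_I w⟩
    · rintro ⟨s, θ, hs, rfl⟩
      simpa [Complex.norm_exp_ofReal_mul_I] using hs.trans_le (le_abs_self s)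
  rw [hpolar]
  exact (isPreconnected_Ioi.prod isPreconnected_univ).image _ (by fun_prop)

theorem isPreconnected_compl_of_subset_sphere {K : Set ℂ} {r : ℝ} (hr : 0 < r)
    (hK : K ⊆ sphere 0 r) {ζ : ℂ} (hζ : ζ ∈ sphere (0 : ℂ) r) (hζK : ζ ∉ K) :
    IsPreconnected Kᶜ := by
  have hinner : IsPreconnected (insert ζ (ball (0 : ℂ) r)) :=
    (convex_ball _ _).isPreconnected.subset_closure (subset_insert _ _)
      (insert_subset (by rw [closure_ball _ hr.ne']; exact sphere_subset_closedBall hζ)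
        subset_closure)
  have houter : IsPreconnected (insert ζ (closedBall (0 : ℂ) r)ᶜ) :=
    (Complex.isPreconnected_compl_closedBall r).subset_closure (subset_insert _ _)
      (insert_subset (by rw [closure_compl, interior_closedBall _ hr.ne']; simpa using hζ.ge)
        subset_closure)
  refine (hinner.union ζ (mem_insert _ _) (mem_insert _ _) houter).subset_closure ?_
    fun w _ => ?_
  · rintro w ((rfl | hw) | (rfl | hw)) hwK
    · exact hζK hwK
    · exact (mem_ball_zero_iff.mp hw).ne (mem_sphere_zero_iff_norm.mp (hK hwK))
    · exact hζK hwK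
    · exact hw (sphere_subset_closedBall (hK hwK))
  · by_cases hw : w ∈ closedBall (0 : ℂ) r
    · rw [← closure_ball _ hr.ne'] at hw
      exact closure_mono (subset_union_left.trans' (subset_insert _ _)) hw
    · exact subset_closure (Or.inr (mem_insert_of_mem _ hw))

theorem IsPreconnected.exists_subset_of_subset_iUnion {X ι : Type*} [TopologicalSpace X]
    [Finite ι] {S : Set X} (hS : IsPreconnected S) (hne : S.Nonempty) {F : ι → Set X}
    (hF : ∀ i, IsClosed (F i)) (hdisj : Pairwise (Function.onFun Disjoint F))
    (hSF : S ⊆ ⋃ i, F i) : ∃ i, S ⊆ F i := by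
  obtain ⟨x, hxS⟩ := hne
  obtain ⟨i, hxi⟩ := mem_iUnion.mp (hSF hxS)
  set G := ⋃ (j) (_ : j ≠ i), F j
  have hG : IsClosed G :=
    isClosed_iUnion_of_finite fun j => isClosed_iUnion_of_finite fun _ => hF j
  have hFG : Disjoint (F i) G :=
    disjoint_iUnion_right.mpr fun j => disjoint_iUnion_right.mpr fun hji => hdisj hji.symm
  have hcover : S ⊆ F i ∪ G := by
    intro y hy
    obtain ⟨j, hyj⟩ := mem_iUnion.mp (hSF hy)
    by_cases hji : j = i
    · exact Or.inl (hji ▸ hyj)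
    · exact Or.inr (mem_biUnion hji hyj)
  rcases isPreconnected_iff_subset_of_disjoint_closed.mp hS _ _ (hF i) hG hcover
    (by rw [hFG.inter_eq, inter_empty]) with h | h
  · exact ⟨i, h⟩
  · exact absurd (h hxS) (hFG.notMem_of_mem_left hxi)

theorem exists_exp_mul_I_notMem_image_Icc {a b : ℝ} (hlen : b - a < 2 * Real.pi) :
    ∃ θ : ℝ, Complex.exp (θ * Complex.I) ∉
      (fun θ : ℝ => Complex.exp (θ * Complex.I)) '' Icc a b := by
  -- the point opposite the midpoint of the arc
  refine ⟨(a + b) / 2 + Real.pi, ?_⟩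
  rintro ⟨φ, ⟨hφa, hφb⟩, hφ⟩
  obtain ⟨n, hn⟩ := (Circle.exp_eq_exp (x := (a + b) / 2 + Real.pi) (y := φ)).mp
    (Circle.ext (by rw [Circle.coe_exp, Circle.coe_exp]; exact hφ.symm))
  have h0 : (0 : ℝ) < n := by nlinarith [Real.pi_pos]
  have h1 : (n : ℝ) < 1 := by nlinarith [Real.pi_pos]
  have : (0 : ℤ) < n := by exact_mod_cast h0
  have : n < 1 := by exact_mod_cast h1
  omega

theorem exists_exp_mul_I_notMem_iUnion_arcs {ι : Type*} [Finite ι] {a b : ι → ℝ}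
    (hlen : ∀ i, b i - a i < 2 * Real.pi) {J : ι → Set ℂ}
    (hJ : ∀ i, J i = (fun θ : ℝ => Complex.exp (θ * Complex.I)) '' Icc (a i) (b i))
    (hdisj : Pairwise (Function.onFun Disjoint J)) :
    ∃ θ : ℝ, Complex.exp (θ * Complex.I) ∉ ⋃ i, J i := by
  by_contra! hcover
  have hclosed (i : ι) : IsClosed (J i) := hJ i ▸ (isCompact_Icc.image (by fun_prop)).isClosed
  obtain ⟨i, hi⟩ := (isPreconnected_range (f := fun θ : ℝ => Complex.exp (θ * Complex.I))
    (by fun_prop)).exists_subset_of_subset_iUnion (range_nonempty _) hclosed hdisj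
    (range_subset_iff.mpr hcover)
  obtain ⟨θ, hθ⟩ := exists_exp_mul_I_notMem_image_Icc (hlen i)
  exact hθ (hJ i ▸ hi (mem_range_self θ))

theorem MvPolynomial.eval_aeval_X {σ R : Type*} [CommSemiring R] (v : σ → R) (i : σ)
    (Q : R[X]) : MvPolynomial.eval v (Polynomial.aeval (MvPolynomial.X i) Q) = Q.eval (v i) := by
  induction Q using Polynomial.induction_on <;> simp_all

theorem polynomiallyConvex_closedBall_prod (r s : ℝ) :
    PolynomiallyConvex (closedBall (0 : ℂ) r ×ˢ closedBall (0 : ℂ) s) := by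
  intro z hz
  simp only [mem_prod, mem_closedBall_zero_iff, not_and_or, not_le] at hz
  rcases hz with h | h
  · exact ⟨MvPolynomial.X 0, fun w hw => by
      simpa using (mem_closedBall_zero_iff.mp hw.1).trans_lt h⟩
  · exact ⟨MvPolynomial.X 1, fun w hw => by
      simpa using (mem_closedBall_zero_iff.mp hw.2).trans_lt h⟩

theorem polynomiallyConvex_closedBall_prod_zero_union_prod_closedBall {K : Set ℂ}
    (hK : IsCompact K) (hK1 : K ⊆ closedBall 0 1) (hKc : IsPreconnected Kᶜ) :
    PolynomiallyConvex ((closedBall (0 : ℂ) 1 ×ˢ {0}) ∪ K ×ˢ closedBall (0 : ℂ) 1) := by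
  intro z hz
  by_cases hzB : z ∈ closedBall (0 : ℂ) 1 ×ˢ closedBall (0 : ℂ) 1
  swap
  · obtain ⟨p, hp⟩ := polynomiallyConvex_closedBall_prod 1 1 z hzB
    refine ⟨p, fun w hw => hp w ?_⟩
    rcases hw with ⟨hw1, hw2⟩ | ⟨hw1, hw2⟩
    · exact ⟨hw1, by simp [mem_singleton_iff.mp hw2]⟩
    · exact ⟨hK1 hw1, hw2⟩
  have hz2 : z.2 ≠ 0 := fun h => hz (Or.inl ⟨hzB.1, h⟩)
  have hz1 : z.1 ∉ K := fun h => hz (Or.inr ⟨h, hzB.2⟩)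
  obtain ⟨Q, hQz, hQK⟩ := exists_polynomial_eval_eq_one_norm_lt hK hKc hz1 (norm_pos_iff.mpr hz2)
  have heval (v : ℂ × ℂ) :
      MvPolynomial.eval ![v.1, v.2] (MvPolynomial.X 1 * aeval (MvPolynomial.X 0) Q) =
        v.2 * Q.eval v.1 := by
    simp [MvPolynomial.eval_aeval_X]
  refine ⟨MvPolynomial.X 1 * aeval (MvPolynomial.X 0) Q, ?_⟩
  rintro w (⟨-, hw⟩ | ⟨hw1, hw2⟩)
  · simp [heval, mem_singleton_iff.mp hw, hQz, hz2]
  · rw [heval, heval]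
    calc ‖w.2 * Q.eval w.1‖ ≤ ‖Q.eval w.1‖ := by
          rw [norm_mul]
          exact mul_le_of_le_one_left (norm_nonneg _) (mem_closedBall_zero_iff.mp hw2)
      _ < ‖z.2‖ := hQK _ hw1
      _ = ‖z.2 * Q.eval z.1‖ := by simp [hQz]

theorem polynomiallyConvex_disc_union_arcs_general (m : ℕ) (a b : Fin m → ℝ)
    (hlen : ∀ j, b j - a j < 2 * Real.pi)
    (J : Fin m → Set ℂ)
    (hJ : ∀ j, J j = (fun θ : ℝ => Complex.exp (θ * Complex.I)) '' Icc (a j) (b j))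
    (hdisj : Pairwise (Function.onFun Disjoint J)) :
    PolynomiallyConvex
      ((closedBall (0:ℂ) 1 ×ˢ ({0} : Set ℂ)) ∪ ⋃ j, (J j ×ˢ closedBall (0:ℂ) 1)) := by
  have hKS : ⋃ j, J j ⊆ sphere 0 1 := iUnion_subset fun j => hJ j ▸ by
    rintro _ ⟨θ, -, rfl⟩
    simp
  have hK : IsCompact (⋃ j, J j) :=
    isCompact_iUnion fun j => hJ j ▸ isCompact_Icc.image (by fun_prop)
  obtain ⟨θ, hθ⟩ := exists_exp_mul_I_notMem_iUnion_arcs hlen hJ hdisj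
  rw [← iUnion_prod_const]
  exact polynomiallyConvex_closedBall_prod_zero_union_prod_closedBall hK
    (hKS.trans sphere_subset_closedBall)
    (isPreconnected_compl_of_subset_sphere one_pos hKS (by simp) hθ)

/-- `L = (𝔻̄ × {0}) ∪ ⋃ⱼ (Jⱼ × 𝔻̄)` is polynomially convex, for pairwise
disjoint proper closed arcs `J₁,…,J_m` of the unit circle. -/
theorem polynomiallyConvex_disc_union_arcs (m : ℕ) (a b : Fin m → ℝ)
    (hab : ∀ j, a j ≤ b j) (hlen : ∀ j, b j - a j < 2 * Real.pi)
    (J : Fin m → Set ℂ)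
    (hJ : ∀ j, J j = (fun θ : ℝ => Complex.exp (θ * Complex.I)) '' Icc (a j) (b j))
    (hdisj : Pairwise (Function.onFun Disjoint J)) :
    PolynomiallyConvex
      ((closedBall (0:ℂ) 1 ×ˢ ({0} : Set ℂ)) ∪ ⋃ j, (J j ×ˢ closedBall (0:ℂ) 1)) :=
  polynomiallyConvex_disc_union_arcs_general m a b hlen J hJ hdisj
end
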